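/- Let d ≥ 1 be an integer, let σ be a finite nonnegative Borel measure on ℝ^{2d} = ℝ^d × ℝ^d supported in the closed unit ball, and let φ be a Schwartz function on ℝ^d. For k ∈ ℤ set P_{<k}f = f ∗ φ_{2^{−k}} with φ_δ(z) = δ^{−d}φ(z/δ). Then there is a constant C depending only on d and φ such that for all Schwartz functions f₁, f₂ on ℝ^d, all x ∈ ℝ^d and all k ∈ ℤ, sup_{1<t<2} |∫_{ℝ^{2d}} P_{<k}f₁(x − 2^{−k}t y₁)·f₂(x − 2^{−k}t y₂) dσ(y₁,y₂)| ≤ C·M_HL f₁(x)·M_σ²(f₂)(x), where M_σ²(f)(x) = sup_{t>0} ∫_{ℝ^{2d}} |f(x − t y₂)| dσ(y₁,y₂). -/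

import Mathlib

open MeasureTheory Metric Filter Complex SchwartzMap
open scoped ENNReal NNReal RealInnerProductSpace FourierTransform BigOperators

noncomputable section

/-- The `i`-th `ℝ^d`-block of a point of `ℝ^{md} = (ℝ^d)^m`. -/
def blk {m d : ℕ} (y : EuclideanSpace ℝ (Fin m × Fin d)) (i : Fin m) :
    EuclideanSpace ℝ (Fin d) := WithLp.toLp 2 (fun a => y (i, a))

/-- Fourier transform of a measure: `σ̂(ξ) = ∫ e^{−2πi y·ξ} dσ(y)`. -/
def measFT {ι : Type*} [Fintype ι] (σ : Measure (EuclideanSpace ℝ ι))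
    (ξ : EuclideanSpace ℝ ι) : ℂ :=
  ∫ y, Complex.exp ((-2 : ℂ) * (Real.pi : ℂ) * Complex.I * ((⟪y, ξ⟫ : ℝ) : ℂ)) ∂σ

/-- The multilinear average `A_σ(F)(x,t) = ∫ ∏ f_i(x − t y_i) dσ(y)`. -/
def mAvg {m d : ℕ} (σ : Measure (EuclideanSpace ℝ (Fin m × Fin d)))
    (f : Fin m → (EuclideanSpace ℝ (Fin d) → ℂ))
    (x : EuclideanSpace ℝ (Fin d)) (t : ℝ) : ℂ :=
  ∫ y, (∏ i, f i (x - t • blk y i)) ∂σ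

/-- The local maximal operator `M_σ^{loc}(F)(x) = sup_{1<t<2} |A_σ(F)(x,t)|`. -/
def mMaxLoc {m d : ℕ} (σ : Measure (EuclideanSpace ℝ (Fin m × Fin d)))
    (f : Fin m → (EuclideanSpace ℝ (Fin d) → ℂ))
    (x : EuclideanSpace ℝ (Fin d)) : ℝ≥0∞ :=
  ⨆ (t : ℝ) (_ : t ∈ Set.Ioo (1 : ℝ) 2), (‖mAvg σ f x t‖₊ : ℝ≥0∞)

/-- The centered Hardy–Littlewood maximal function (with values in `ℝ≥0∞`). -/
def MHL {d : ℕ} (f : EuclideanSpace ℝ (Fin d) → ℂ)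
    (x : EuclideanSpace ℝ (Fin d)) : ℝ≥0∞ :=
  ⨆ (r : ℝ) (_ : 0 < r),
    (volume (Metric.ball x r))⁻¹ * ∫⁻ y in Metric.ball x r, (‖f y‖₊ : ℝ≥0∞)

/-- The low-pass piece `P_{<k} f = f ∗ φ_{2^{−k}}`, where
`φ_δ(z) = δ^{−d} φ(z/δ)` and `δ = 2^{−k}`. -/
def lowPass {d : ℕ} (φ : EuclideanSpace ℝ (Fin d) → ℂ) (k : ℤ)
    (f : EuclideanSpace ℝ (Fin d) → ℂ) (x : EuclideanSpace ℝ (Fin d)) : ℂ :=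
  ∫ z, f z * ((((2 : ℝ) ^ (k * (d : ℤ)) : ℝ) : ℂ) * φ ((2 : ℝ) ^ k • (x - z)))

/-- The linear maximal average in the second variable:
`M_σ²(f)(x) = sup_{t>0} ∫ |f(x − t y₂)| dσ(y₁,y₂)`. -/
def maxAvgSecond {d : ℕ} (σ : Measure (EuclideanSpace ℝ (Fin 2 × Fin d)))
    (f : EuclideanSpace ℝ (Fin d) → ℂ) (x : EuclideanSpace ℝ (Fin d)) : ℝ≥0∞ :=
  ⨆ (t : ℝ) (_ : 0 < t), ∫⁻ y, (‖f (x - t • blk y 1)‖₊ : ℝ≥0∞) ∂σ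

namespace Aux

lemma blk_norm_le {m d : ℕ} (y : EuclideanSpace ℝ (Fin m × Fin d)) (i : Fin m) :
    ‖blk y i‖ ≤ ‖y‖ := by
  rw [EuclideanSpace.norm_eq, EuclideanSpace.norm_eq]
  apply Real.sqrt_le_sqrt
  calc ∑ a : Fin d, ‖blk y i a‖ ^ 2 = ∑ a : Fin d, ‖y (i, a)‖ ^ 2 := rfl
    _ ≤ ∑ i' : Fin m, ∑ a : Fin d, ‖y (i', a)‖ ^ 2 :=
        Finset.single_le_sum (f := fun i' => ∑ a : Fin d, ‖y (i', a)‖ ^ 2)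
          (fun i' _ => Finset.sum_nonneg fun a _ => sq_nonneg _) (Finset.mem_univ i)
    _ = ∑ p : Fin m × Fin d, ‖y p‖ ^ 2 := by rw [Fintype.sum_prod_type]

lemma continuous_blk {m d : ℕ} (i : Fin m) :
    Continuous fun y : EuclideanSpace ℝ (Fin m × Fin d) => blk y i := by
  unfold blk
  exact (PiLp.continuous_toLp 2 _).comp (continuous_pi fun a =>
    (EuclideanSpace.proj (𝕜 := ℝ) ((i, a) : Fin m × Fin d)).continuous)

lemma lintegral_ball_le_MHL {d : ℕ} (f : EuclideanSpace ℝ (Fin d) → ℂ)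
    (x : EuclideanSpace ℝ (Fin d)) {r : ℝ} (hr : 0 < r) :
    ∫⁻ w in Metric.ball x r, (‖f w‖₊ : ℝ≥0∞) ≤ volume (Metric.ball x r) * MHL f x := by
  have h : (volume (Metric.ball x r))⁻¹ * ∫⁻ w in Metric.ball x r, (‖f w‖₊ : ℝ≥0∞)
      ≤ MHL f x := by
    exact le_iSup₂ (f := fun (r : ℝ) (_ : 0 < r) =>
      (volume (Metric.ball x r))⁻¹ * ∫⁻ w in Metric.ball x r, (‖f w‖₊ : ℝ≥0∞)) r hr
  have h0 : volume (Metric.ball x r) ≠ 0 := (measure_ball_pos _ _ hr).ne'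
  have ht : volume (Metric.ball x r) ≠ ⊤ := measure_ball_lt_top.ne
  calc ∫⁻ w in Metric.ball x r, (‖f w‖₊ : ℝ≥0∞)
      = volume (Metric.ball x r) * ((volume (Metric.ball x r))⁻¹ *
          ∫⁻ w in Metric.ball x r, (‖f w‖₊ : ℝ≥0∞)) := by
        rw [← mul_assoc, ENNReal.mul_inv_cancel h0 ht, one_mul]
    _ ≤ volume (Metric.ball x r) * MHL f x := mul_le_mul_right h _

lemma dyadic {d : ℕ} (f : EuclideanSpace ℝ (Fin d) → ℂ) (hf : Measurable f)
    (x : EuclideanSpace ℝ (Fin d)) {ε : ℝ} (hε : 0 < ε) :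
    ∫⁻ w, (‖f w‖₊ : ℝ≥0∞) * ENNReal.ofReal (ε ^ d / (1 + ε * ‖x - w‖) ^ (d + 1))
      ≤ ENNReal.ofReal ((2:ℝ) ^ (d + 2)) *
        volume (Metric.ball (0 : EuclideanSpace ℝ (Fin d)) 1) * MHL f x := by
  set V := volume (Metric.ball (0 : EuclideanSpace ℝ (Fin d)) 1) with hV
  set B : ℕ → Set (EuclideanSpace ℝ (Fin d)) := fun j => Metric.ball x ((2:ℝ) ^ j / ε)
    with hB
  set e : ℕ → ℝ≥0∞ := fun j =>
    ENNReal.ofReal (ε ^ d * (2:ℝ) ^ (((1:ℤ) - (j:ℤ)) * ((d:ℤ) + 1))) with he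
  -- pointwise bound on the weight
  have hpt : ∀ w, ENNReal.ofReal (ε ^ d / (1 + ε * ‖x - w‖) ^ (d + 1))
      ≤ ∑' j, (B j).indicator (fun _ => e j) w := by
    intro w
    set r := ‖x - w‖ with hr
    have hr0 : 0 ≤ r := norm_nonneg _
    have h
      : ∃ j : ℕ, r < (2:ℝ) ^ j / ε := by
      obtain ⟨j, hj⟩ := pow_unbounded_of_one_lt (ε * r) (one_lt_two (α := ℝ))
      exact ⟨j, by rw [lt_div_iff₀ hε]; linarith [hj]⟩
    classical
    set j₀ := Nat.find h with hj₀
    have hmem : w ∈ B j₀ := by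
      simp only [hB, Metric.mem_ball, dist_comm w x, ← dist_eq_norm] at *
      have := Nat.find_spec h
      simpa [dist_comm, dist_eq_norm, hr] using this
    have hlow : (2:ℝ) ^ ((j₀:ℤ) - 1) ≤ 1 + ε * r := by
      rcases Nat.eq_zero_or_pos j₀ with h0 | hpos
      · rw [h0]
        simp only [Nat.cast_zero, zero_sub]
        have : (2:ℝ) ^ (-1 : ℤ) = 1/2 := by norm_num
        rw [this]
        nlinarith [mul_nonneg hε.le hr0]
      · have hm : ¬ r < (2:ℝ) ^ (j₀ - 1) / ε := Nat.find_min h (Nat.sub_lt hpos one_pos)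
        push_neg at hm
        have : (2:ℝ) ^ (j₀ - 1) ≤ ε * r := by
          rw [div_le_iff₀ hε] at hm; linarith [hm]
        have hcast : ((j₀ : ℤ) - 1) = ((j₀ - 1 : ℕ) : ℤ) := by
          omega
        rw [hcast, zpow_natCast]
        linarith
    have hkey : ε ^ d / (1 + ε * r) ^ (d + 1)
        ≤ ε ^ d * (2:ℝ) ^ (((1:ℤ) - (j₀:ℤ)) * ((d:ℤ) + 1)) := by
      have hb : (0:ℝ) < (2:ℝ) ^ ((j₀:ℤ) - 1) := zpow_pos (by norm_num) _
      have h1 : ((2:ℝ) ^ ((j₀:ℤ) - 1)) ^ (d + 1) ≤ (1 + ε * r) ^ (d + 1) :=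
        pow_le_pow_left₀ hb.le hlow _
      have h2 : ε ^ d / (1 + ε * r) ^ (d + 1) ≤ ε ^ d / ((2:ℝ) ^ ((j₀:ℤ) - 1)) ^ (d + 1) :=
        div_le_div_of_nonneg_left (by positivity) (by positivity) h1
      refine h2.trans_eq ?_
      rw [div_eq_mul_inv]
      congr 1
      rw [← zpow_natCast ((2:ℝ) ^ ((j₀:ℤ) - 1)), ← zpow_mul, ← zpow_neg]
      congr 1
      push_cast
      ring
    calc ENNReal.ofReal (ε ^ d / (1 + ε * r) ^ (d + 1)) ≤ e j₀ :=
          ENNReal.ofReal_le_ofReal hkey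
      _ = (B j₀).indicator (fun _ => e j₀) w := by rw [Set.indicator_of_mem hmem]
      _ ≤ ∑' j, (B j).indicator (fun _ => e j) w := ENNReal.le_tsum j₀
  calc ∫⁻ w, (‖f w‖₊ : ℝ≥0∞) * ENNReal.ofReal (ε ^ d / (1 + ε * ‖x - w‖) ^ (d + 1))
      ≤ ∫⁻ w, (‖f w‖₊ : ℝ≥0∞) * ∑' j, (B j).indicator (fun _ => e j) w :=
        lintegral_mono fun w => mul_le_mul_right (hpt w) _
    _ = ∫⁻ w, ∑' j, (‖f w‖₊ : ℝ≥0∞) * (B j).indicator (fun _ => e j) w := by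
        simp_rw [ENNReal.tsum_mul_left]
    _ = ∑' j, ∫⁻ w, (‖f w‖₊ : ℝ≥0∞) * (B j).indicator (fun _ => e j) w := by
        refine lintegral_tsum fun j => ?_
        exact ((hf.nnnorm.coe_nnreal_ennreal).mul
          ((measurable_const (a := e j)).indicator measurableSet_ball)).aemeasurable
    _ ≤ ∑' j, ENNReal.ofReal ((2:ℝ) ^ (d + 1) * (1/2) ^ j) * V * MHL f x := by
        refine ENNReal.tsum_le_tsum fun j => ?_
        have heq : ∀ w, (‖f w‖₊ : ℝ≥0∞) * (B j).indicator (fun _ => e j) w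
            = (B j).indicator (fun w => (‖f w‖₊ : ℝ≥0∞) * e j) w := by
          intro w
          by_cases hw : w ∈ B j
          · simp [hw]
          · simp [hw]
        simp_rw [heq]
        rw [lintegral_indicator measurableSet_ball,
          lintegral_mul_const _ hf.nnnorm.coe_nnreal_ennreal]
        have hrad : (0:ℝ) < (2:ℝ) ^ j / ε := by positivity
        have hvol : volume (B j) = ENNReal.ofReal (((2:ℝ) ^ j / ε) ^ d) * V := by
          rw [hB]
          rw [Measure.addHaar_ball_of_pos _ x hrad, finrank_euclideanSpace_fin]
        calc (∫⁻ w in B j, (‖f w‖₊ : ℝ≥0∞)) * e j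
            ≤ volume (B j) * MHL f x * e j :=
              mul_le_mul_left (lintegral_ball_le_MHL f x hrad) _
          _ = volume (B j) * e j * MHL f x := by ring
          _ = ENNReal.ofReal ((2:ℝ) ^ (d + 1) * (1/2) ^ j) * V * MHL f x := by
              have hR : (2:ℝ) ^ (d+1) * (1/2:ℝ) ^ j = (2:ℝ) ^ (((d:ℤ)+1) - (j:ℤ)) := by
                rw [zpow_sub₀ (by norm_num : (2:ℝ) ≠ 0), one_div, inv_pow,
                  ← zpow_natCast (2:ℝ) j, ← zpow_natCast (2:ℝ) (d+1), div_eq_mul_inv]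
                push_cast
                ring_nf
              have hreal : ((2:ℝ)^j/ε)^d * (ε^d * (2:ℝ)^(((1:ℤ)-(j:ℤ))*((d:ℤ)+1)))
                  = (2:ℝ)^(d+1) * (1/2:ℝ)^j := by
                rw [div_pow, mul_comm (ε^d) _, ← mul_assoc, mul_right_comm,
                  div_mul_cancel₀ _ (by positivity : (ε:ℝ)^d ≠ 0), ← pow_mul,
                  ← zpow_natCast (2:ℝ) (j*d), ← zpow_add₀ (by norm_num : (2:ℝ) ≠ 0), hR]
                congr 1
                push_cast
                ring
              rw [hvol, mul_right_comm (ENNReal.ofReal _) V (e j), he,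
                ← ENNReal.ofReal_mul (by positivity), hreal]
    _ = (∑' j : ℕ, ENNReal.ofReal ((2:ℝ) ^ (d + 1) * (1/2) ^ j)) * V * MHL f x := by
        rw [ENNReal.tsum_mul_right, ENNReal.tsum_mul_right]
    _ ≤ ENNReal.ofReal ((2:ℝ) ^ (d + 2)) * V * MHL f x := by
        refine mul_le_mul_left (mul_le_mul_left ?_ _) _
        have h12 : ENNReal.ofReal (1/2 : ℝ) = 2⁻¹ := by
          rw [one_div, ENNReal.ofReal_inv_of_pos (by norm_num)]
          norm_num
        have hterm : ∀ j : ℕ, ENNReal.ofReal ((2:ℝ) ^ (d + 1) * (1/2) ^ j)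
            = ENNReal.ofReal ((2:ℝ) ^ (d + 1)) * (2⁻¹ : ℝ≥0∞) ^ j := by
          intro j
          rw [ENNReal.ofReal_mul (by positivity)]
          congr 1
          rw [ENNReal.ofReal_pow (by norm_num : (0:ℝ) ≤ 1/2), h12]
        calc ∑' j : ℕ, ENNReal.ofReal ((2:ℝ) ^ (d + 1) * (1/2) ^ j)
            = ENNReal.ofReal ((2:ℝ) ^ (d + 1)) * ∑' j : ℕ, (2⁻¹ : ℝ≥0∞) ^ j := by
              simp_rw [hterm]; rw [ENNReal.tsum_mul_left]
          _ = ENNReal.ofReal ((2:ℝ) ^ (d + 1)) * 2 := by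
              rw [ENNReal.tsum_geometric, ENNReal.one_sub_inv_two, inv_inv]
          _ ≤ ENNReal.ofReal ((2:ℝ) ^ (d + 2)) := by
              rw [← ENNReal.ofReal_ofNat 2, ← ENNReal.ofReal_mul (by positivity)]
              apply ENNReal.ofReal_le_ofReal
              exact le_of_eq (pow_succ 2 (d+1)).symm


lemma core {d : ℕ} (φ : SchwartzMap (EuclideanSpace ℝ (Fin d)) ℂ) :
    ∃ C : ℝ, 0 < C ∧ ∀ (f : SchwartzMap (EuclideanSpace ℝ (Fin d)) ℂ)
      (x z : EuclideanSpace ℝ (Fin d)) (k : ℤ), dist z x ≤ 2 * (2:ℝ) ^ (-k) →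
      (‖lowPass (⇑φ) k (⇑f) z‖₊ : ℝ≥0∞) ≤ ENNReal.ofReal C * MHL (⇑f) x := by
  set Cφ : ℝ := 2 ^ (d+1) *
    (Finset.Iic ((d+1, 0) : ℕ × ℕ)).sup (fun m => SchwartzMap.seminorm ℝ m.1 m.2) φ with hCφ
  have hφbound : ∀ u, (1 + ‖u‖) ^ (d+1) * ‖φ u‖ ≤ Cφ := by
    intro u
    have := SchwartzMap.one_add_le_sup_seminorm_apply (𝕜 := ℝ) (m := (d+1, 0))
      le_rfl le_rfl φ u
    simpa [norm_iteratedFDeriv_zero] using this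
  have hCφ0 : 0 ≤ Cφ := le_trans (by positivity) (hφbound 0)
  set V : ℝ := (volume (Metric.ball (0 : EuclideanSpace ℝ (Fin d)) 1)).toReal with hVdef
  have hV0 : 0 ≤ V := ENNReal.toReal_nonneg
  refine ⟨Cφ * 3 ^ (d+1) * (2 ^ (d+2) * V) + 1, by positivity, ?_⟩
  intro f x z k hzx
  set ε : ℝ := (2:ℝ) ^ k with hεdef
  have hε : 0 < ε := zpow_pos (by norm_num) k
  have hcd : ((2:ℝ) ^ (k * (d : ℤ)) : ℝ) = ε ^ d := by
    rw [hεdef, ← zpow_natCast ((2:ℝ) ^ k) d, ← zpow_mul]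
  have hinv : (2:ℝ) ^ (-k) = ε⁻¹ := by rw [hεdef, zpow_neg]
  -- Step A : bound by a lintegral
  have stepA : (‖lowPass (⇑φ) k (⇑f) z‖₊ : ℝ≥0∞) ≤
      ∫⁻ w, ENNReal.ofReal
        ‖f w * ((((2 : ℝ) ^ (k * (d : ℤ)) : ℝ) : ℂ) * φ (ε • (z - w)))‖ := by
    rw [← enorm_eq_nnnorm, ← ofReal_norm]
    exact le_trans (ENNReal.ofReal_le_ofReal (norm_integral_le_lintegral_norm _))
      ENNReal.ofReal_toReal_le
  -- pointwise kernel bound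
  have hker : ∀ w, ENNReal.ofReal
      ‖f w * ((((2 : ℝ) ^ (k * (d : ℤ)) : ℝ) : ℂ) * φ (ε • (z - w)))‖
      ≤ (‖f w‖₊ : ℝ≥0∞) * (ENNReal.ofReal (Cφ * 3 ^ (d+1)) *
          ENNReal.ofReal (ε ^ d / (1 + ε * ‖x - w‖) ^ (d + 1))) := by
    intro w
    set u := ε • (z - w) with hu
    have hnu : ‖u‖ = ε * ‖z - w‖ := by
      rw [hu, norm_smul, Real.norm_eq_abs, abs_of_pos hε]
    have h1 : ‖φ u‖ ≤ Cφ / (1 + ‖u‖) ^ (d+1) := by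
      rw [le_div_iff₀ (by positivity)]
      linarith [hφbound u]
    have htri : ‖x - w‖ ≤ ‖x - z‖ + ‖z - w‖ := by
      have := dist_triangle x z w
      simpa [dist_eq_norm] using this
    have hxz : ε * ‖x - z‖ ≤ 2 := by
      have : ‖x - z‖ ≤ 2 * ε⁻¹ := by
        rw [← hinv]; rw [dist_comm, dist_eq_norm] at hzx; exact hzx
      calc ε * ‖x - z‖ ≤ ε * (2 * ε⁻¹) := by
            exact mul_le_mul_of_nonneg_left this hε.le
        _ = 2 := by field_simp
    have h2 : 1 + ε * ‖x - w‖ ≤ 3 * (1 + ε * ‖z - w‖) := by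
      have := mul_le_mul_of_nonneg_left htri hε.le
      nlinarith [norm_nonneg (z - w), hε.le]
    have h3 : (1 + ε * ‖x - w‖) ^ (d+1) ≤ 3 ^ (d+1) * (1 + ε * ‖z - w‖) ^ (d+1) := by
      rw [← mul_pow]
      exact pow_le_pow_left₀ (by positivity) h2 _
    have h4 : Cφ / (1 + ‖u‖) ^ (d+1)
        ≤ Cφ * 3 ^ (d+1) / (1 + ε * ‖x - w‖) ^ (d+1) := by
      rw [hnu, div_le_div_iff₀ (by positivity) (by positivity)]
      nlinarith [mul_le_mul_of_nonneg_left h3 hCφ0]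
    have hnorm : ‖f w * ((((2 : ℝ) ^ (k * (d : ℤ)) : ℝ) : ℂ) * φ u)‖
        = ‖f w‖ * (ε ^ d * ‖φ u‖) := by
      rw [norm_mul, norm_mul, Complex.norm_real, Real.norm_eq_abs, hcd,
        abs_of_pos (by positivity)]
    have hreal : ε ^ d * ‖φ u‖ ≤ Cφ * 3 ^ (d+1) * (ε ^ d / (1 + ε * ‖x - w‖) ^ (d+1)) := by
      calc ε ^ d * ‖φ u‖ ≤ ε ^ d * (Cφ * 3 ^ (d+1) / (1 + ε * ‖x - w‖) ^ (d+1)) :=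
            mul_le_mul_of_nonneg_left (h1.trans h4) (by positivity)
        _ = Cφ * 3 ^ (d+1) * (ε ^ d / (1 + ε * ‖x - w‖) ^ (d+1)) := by ring
    calc ENNReal.ofReal ‖f w * ((((2 : ℝ) ^ (k * (d : ℤ)) : ℝ) : ℂ) * φ u)‖
        = ENNReal.ofReal ‖f w‖ * ENNReal.ofReal (ε ^ d * ‖φ u‖) := by
          rw [hnorm, ENNReal.ofReal_mul (norm_nonneg _)]
      _ ≤ ENNReal.ofReal ‖f w‖ *
          ENNReal.ofReal (Cφ * 3 ^ (d+1) * (ε ^ d / (1 + ε * ‖x - w‖) ^ (d+1))) :=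
          mul_le_mul_right (ENNReal.ofReal_le_ofReal hreal) _
      _ = (‖f w‖₊ : ℝ≥0∞) * (ENNReal.ofReal (Cφ * 3 ^ (d+1)) *
          ENNReal.ofReal (ε ^ d / (1 + ε * ‖x - w‖) ^ (d + 1))) := by
          rw [ofReal_norm, enorm_eq_nnnorm, ENNReal.ofReal_mul (by positivity)]
  have hmball : volume (Metric.ball (0 : EuclideanSpace ℝ (Fin d)) 1) ≠ ⊤ :=
    measure_ball_lt_top.ne
  calc (‖lowPass (⇑φ) k (⇑f) z‖₊ : ℝ≥0∞)
      ≤ ∫⁻ w, ENNReal.ofReal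
          ‖f w * ((((2 : ℝ) ^ (k * (d : ℤ)) : ℝ) : ℂ) * φ (ε • (z - w)))‖ := stepA
    _ ≤ ∫⁻ w, (‖f w‖₊ : ℝ≥0∞) * (ENNReal.ofReal (Cφ * 3 ^ (d+1)) *
          ENNReal.ofReal (ε ^ d / (1 + ε * ‖x - w‖) ^ (d + 1))) := lintegral_mono hker
    _ = ENNReal.ofReal (Cφ * 3 ^ (d+1)) *
          ∫⁻ w, (‖f w‖₊ : ℝ≥0∞) * ENNReal.ofReal (ε ^ d / (1 + ε * ‖x - w‖) ^ (d + 1)) := by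
        simp_rw [mul_left_comm ((‖f _‖₊ : ℝ≥0∞)) (ENNReal.ofReal (Cφ * 3 ^ (d+1)))]
        exact lintegral_const_mul' _ _ ENNReal.ofReal_ne_top
    _ ≤ ENNReal.ofReal (Cφ * 3 ^ (d+1)) * (ENNReal.ofReal ((2:ℝ) ^ (d + 2)) *
          volume (Metric.ball (0 : EuclideanSpace ℝ (Fin d)) 1) * MHL (⇑f) x) :=
        mul_le_mul_right (dyadic (⇑f) (f.continuous.measurable) x hε) _
    _ ≤ ENNReal.ofReal (Cφ * 3 ^ (d+1) * (2 ^ (d+2) * V) + 1) * MHL (⇑f) x := by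
        rw [← mul_assoc, ← mul_assoc]
        refine mul_le_mul_left ?_ _
        rw [← ENNReal.ofReal_toReal hmball, ← hVdef,
          ← ENNReal.ofReal_mul (by positivity), ← ENNReal.ofReal_mul (by positivity)]
        apply ENNReal.ofReal_le_ofReal
        nlinarith [mul_nonneg (mul_nonneg hCφ0 (by positivity : (0:ℝ) ≤ 3 ^ (d+1)))
          (by positivity : (0:ℝ) ≤ 2 ^ (d+2) * V)]

end Aux

/-- Lemma 4.1 of the paper (case m = 2, α = 1). -/
theorem bilinear_lowpass_maximal_bound (d : ℕ) (hd : 1 ≤ d)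
    (σ : Measure (EuclideanSpace ℝ (Fin 2 × Fin d))) [IsFiniteMeasure σ]
    (hsupp : σ (Metric.closedBall 0 1)ᶜ = 0)
    (φ : SchwartzMap (EuclideanSpace ℝ (Fin d)) ℂ) :
    ∃ C : ℝ, 0 < C ∧
      ∀ f₁ f₂ : SchwartzMap (EuclideanSpace ℝ (Fin d)) ℂ,
        ∀ (x : EuclideanSpace ℝ (Fin d)) (k : ℤ),
          (⨆ (t : ℝ) (_ : t ∈ Set.Ioo (1 : ℝ) 2),
              (‖∫ y, lowPass (⇑φ) k (⇑f₁) (x - ((2 : ℝ) ^ (-k) * t) • blk y 0) *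
                  f₂ (x - ((2 : ℝ) ^ (-k) * t) • blk y 1) ∂σ‖₊ : ℝ≥0∞))
            ≤ ENNReal.ofReal C * MHL (⇑f₁) x * maxAvgSecond σ (⇑f₂) x := by
  obtain ⟨C, hCpos, hcore⟩ := Aux.core φ
  refine ⟨C, hCpos, ?_⟩
  intro f₁ f₂ x k
  refine iSup₂_le fun t ht => ?_
  set s : ℝ := (2 : ℝ) ^ (-k) * t with hs_def
  have hpow : (0:ℝ) < (2:ℝ) ^ (-k) := zpow_pos (by norm_num) _
  have hs : 0 < s := mul_pos hpow (lt_trans one_pos ht.1)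
  have hae : ∀ᵐ y ∂σ, y ∈ Metric.closedBall (0 : EuclideanSpace ℝ (Fin 2 × Fin d)) 1 :=
    mem_ae_iff.mpr hsupp
  set g : EuclideanSpace ℝ (Fin 2 × Fin d) → ℂ :=
    fun y => lowPass (⇑φ) k (⇑f₁) (x - s • blk y 0) with hg
  set h : EuclideanSpace ℝ (Fin 2 × Fin d) → ℝ≥0∞ :=
    fun y => (‖f₂ (x - s • blk y 1)‖₊ : ℝ≥0∞) with hh
  have hhmeas : Measurable h := by
    have : Continuous fun y : EuclideanSpace ℝ (Fin 2 × Fin d) =>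
        f₂ (x - s • blk y 1) :=
      f₂.continuous.comp (continuous_const.sub ((Aux.continuous_blk 1).const_smul s))
    exact this.measurable.nnnorm.coe_nnreal_ennreal
  have hgbound : ∀ᵐ y ∂σ, (‖g y‖₊ : ℝ≥0∞) ≤ ENNReal.ofReal C * MHL (⇑f₁) x := by
    filter_upwards [hae] with y hy
    refine hcore f₁ x (x - s • blk y 0) k ?_
    have h1 : ‖blk y 0‖ ≤ 1 := le_trans (Aux.blk_norm_le y 0) (by
      simpa [Metric.mem_closedBall, dist_eq_norm] using hy)
    have : dist (x - s • blk y 0) x = s * ‖blk y 0‖ := by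
      rw [dist_eq_norm, sub_sub_cancel_left, norm_neg, norm_smul, Real.norm_eq_abs,
        abs_of_pos hs]
    rw [this]
    calc s * ‖blk y 0‖ ≤ s * 1 := mul_le_mul_of_nonneg_left h1 hs.le
      _ = (2 : ℝ) ^ (-k) * t := by rw [mul_one]
      _ ≤ 2 * (2:ℝ) ^ (-k) := by nlinarith [ht.2, hpow]
  calc (‖∫ y, g y * f₂ (x - s • blk y 1) ∂σ‖₊ : ℝ≥0∞)
      ≤ ∫⁻ y, ENNReal.ofReal ‖g y * f₂ (x - s • blk y 1)‖ ∂σ := by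
        rw [← enorm_eq_nnnorm, ← ofReal_norm]
        exact le_trans (ENNReal.ofReal_le_ofReal (norm_integral_le_lintegral_norm _))
          ENNReal.ofReal_toReal_le
    _ = ∫⁻ y, (‖g y‖₊ : ℝ≥0∞) * h y ∂σ := by
        refine lintegral_congr fun y => ?_
        rw [norm_mul, ENNReal.ofReal_mul (norm_nonneg _), ofReal_norm, enorm_eq_nnnorm,
          ofReal_norm, enorm_eq_nnnorm]
    _ ≤ ∫⁻ y, (ENNReal.ofReal C * MHL (⇑f₁) x) * h y ∂σ := by
        refine lintegral_mono_ae ?_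
        filter_upwards [hgbound] with y hy
        exact mul_le_mul_left hy _
    _ = (ENNReal.ofReal C * MHL (⇑f₁) x) * ∫⁻ y, h y ∂σ :=
        lintegral_const_mul _ hhmeas
    _ ≤ ENNReal.ofReal C * MHL (⇑f₁) x * maxAvgSecond σ (⇑f₂) x := by
        refine mul_le_mul_right ?_ _
        exact le_iSup₂ (f := fun (t : ℝ) (_ : 0 < t) =>
          ∫⁻ y, (‖f₂ (x - t • blk y 1)‖₊ : ℝ≥0∞) ∂σ) s hs
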